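/- arXiv:2305.05359 — 3 statements merged into one kernel-verified Lean document; each statement's English description precedes it below -/
import Mathlib

section
/- Let P_A, P_N be probability measures with densities f_A, f_N with respect to μ, and P = p·P_A + (1−p)·P_N with p ∈ (0,1). Suppose a test Z: Y → {0,1} (possibly randomized at a threshold set) is the Neyman–Pearson test for H0 = P_N vs H1 = P_A at level α with threshold γ on f_A/f_N. Then Z coincides μ-a.e. (on {dP/dμ > 0}) with the test that accepts when f_A / (dP/dμ) exceeds the threshold c = 1/((1−p)/γ + p), and this latter test attains the minimum β_α(P_A, P_N) = min over tests Z' with E[Z' | A] ≥ 1−α of E[Z' | N]. -/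
open MeasureTheory

/-- Theorem 1: the Neyman–Pearson test between `P_N` (density `fN`) and `P_A` (density `fA`)
with threshold `γ` on the likelihood ratio coincides `μ`-a.e. on `{f > 0}` with the test
thresholding `fA / f` at `c = 1/((1-p)/γ + p)`, where `f` is the density of the mixture
`P = p·P_A + (1-p)·P_N`; and this latter test attains the minimum
`β_α = min { E[Z'|N] : E[Z'|A] ≥ 1-α }`. -/
theorem stmt1 {Y : Type*} [MeasurableSpace Y] (μ : Measure Y)
    (fA fN : Y → ℝ) (hA0 : ∀ y, 0 ≤ fA y) (hN0 : ∀ y, 0 ≤ fN y)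
    (hAm : Measurable fA) (hNm : Measurable fN)
    (hA1 : ∫ y, fA y ∂μ = 1) (hN1 : ∫ y, fN y ∂μ = 1)
    (p : ℝ) (hp0 : 0 < p) (hp1 : p < 1)
    (f : Y → ℝ) (hf : ∀ y, f y = p * fA y + (1 - p) * fN y)
    (γ τ : ℝ) (hγ : 0 < γ) (hτ0 : 0 ≤ τ) (hτ1 : τ ≤ 1)
    (Z : Y → ℝ)
    (hZ : ∀ y, Z y = if fA y > γ * fN y then 1 else if fA y = γ * fN y then τ else 0)
    (α : ℝ) (hα : ∫ y, Z y * fA y ∂μ = 1 - α)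
    (c : ℝ) (hc : c = 1 / ((1 - p) / γ + p))
    (Z' : Y → ℝ)
    (hZ' : ∀ y, Z' y = if fA y / f y > c then 1 else if fA y / f y = c then τ else 0) :
    (∀ᵐ y ∂μ, 0 < f y → Z y = Z' y) ∧
      ∀ W : Y → ℝ, Measurable W → (∀ y, W y ∈ Set.Icc (0 : ℝ) 1) →
        Integrable (fun y => W y * fA y) μ → Integrable (fun y => W y * fN y) μ →
        (1 - α ≤ ∫ y, W y * fA y ∂μ) →
        ∫ y, Z' y * fN y ∂μ ≤ ∫ y, W y * fN y ∂μ := by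
  have hd : (0:ℝ) < 1 - p + p * γ := by nlinarith
  have hc' : c = γ / (1 - p + p * γ) := by
    rw [hc]; field_simp
  -- pointwise equality on {f > 0}
  have key : ∀ y, 0 < f y → Z y = Z' y := by
    intro y hfy
    have hgt : fA y / f y > γ / (1 - p + p * γ) ↔ fA y > γ * fN y := by
      rw [gt_iff_lt, div_lt_div_iff₀ hd hfy, gt_iff_lt]
      constructor <;> intro h <;> nlinarith [hf y]
    have heq : fA y / f y = γ / (1 - p + p * γ) ↔ fA y = γ * fN y := by
      rw [div_eq_div_iff hfy.ne' hd.ne']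
      constructor <;> intro h <;> nlinarith [hf y]
    rw [hZ y, hZ' y, hc']
    simp only [hgt, heq]
  refine ⟨Filter.Eventually.of_forall key, ?_⟩
  intro W hWm hW01 hWA hWN hWα
  -- f = 0 implies fA = fN = 0
  have hzero : ∀ y, ¬ (0 < f y) → fA y = 0 ∧ fN y = 0 := by
    intro y hy
    push_neg at hy
    constructor <;> nlinarith [hf y, hA0 y, hN0 y]
  have hZeqA : (fun y => Z y * fA y) = fun y => Z' y * fA y := by
    funext y
    by_cases hy : 0 < f y
    · rw [key y hy]
    · rw [(hzero y hy).1, mul_zero, mul_zero]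
  have hZeqN : (fun y => Z y * fN y) = fun y => Z' y * fN y := by
    funext y
    by_cases hy : 0 < f y
    · rw [key y hy]
    · rw [(hzero y hy).2, mul_zero, mul_zero]
  -- integrability facts
  have hfAint : Integrable fA μ := by
    by_contra h; rw [integral_undef h] at hA1; norm_num at hA1
  have hfNint : Integrable fN μ := by
    by_contra h; rw [integral_undef h] at hN1; norm_num at hN1
  have hZmeas : Measurable Z := by
    have : Z = fun y => if fA y > γ * fN y then 1 else if fA y = γ * fN y then τ else 0 :=
      funext hZ
    rw [this]
    exact Measurable.ite (measurableSet_lt (hNm.const_mul γ) hAm)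
      measurable_const
      (Measurable.ite (measurableSet_eq_fun hAm (hNm.const_mul γ))
        measurable_const measurable_const)
  have hZ01 : ∀ y, 0 ≤ Z y ∧ Z y ≤ 1 := by
    intro y; rw [hZ y]; split_ifs <;> constructor <;> linarith
  have hZA : Integrable (fun y => Z y * fA y) μ := by
    refine hfAint.mono ((hZmeas.mul hAm).aestronglyMeasurable)
      (Filter.Eventually.of_forall fun y => ?_)
    rw [Real.norm_eq_abs, Real.norm_eq_abs, abs_mul,
      abs_of_nonneg (hZ01 y).1, abs_of_nonneg (hA0 y)]
    nlinarith [(hZ01 y).2, hA0 y]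
  have hZN : Integrable (fun y => Z y * fN y) μ := by
    refine hfNint.mono ((hZmeas.mul hNm).aestronglyMeasurable)
      (Filter.Eventually.of_forall fun y => ?_)
    rw [Real.norm_eq_abs, Real.norm_eq_abs, abs_mul,
      abs_of_nonneg (hZ01 y).1, abs_of_nonneg (hN0 y)]
    nlinarith [(hZ01 y).2, hN0 y]
  -- the Neyman–Pearson pointwise inequality
  have hpt : ∀ y, 0 ≤ (Z y - W y) * (fA y - γ * fN y) := by
    intro y
    obtain ⟨hw0, hw1⟩ := hW01 y
    rw [hZ y]
    split_ifs with h1 h2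
    · nlinarith
    · nlinarith
    · push_neg at h1
      nlinarith [lt_of_le_of_ne h1 h2]
  have hint : 0 ≤ ∫ y, (Z y - W y) * (fA y - γ * fN y) ∂μ := integral_nonneg hpt
  have hexp : (fun y => (Z y - W y) * (fA y - γ * fN y)) =
      fun y => (Z y * fA y) - γ * (Z y * fN y) - (W y * fA y) + γ * (W y * fN y) := by
    funext y; ring
  have hI2 : Integrable (fun y => Z y * fA y - γ * (Z y * fN y)) μ :=
    hZA.sub (hZN.const_mul γ)
  have hI1 : Integrable (fun y => Z y * fA y - γ * (Z y * fN y) - W y * fA y) μ :=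
    hI2.sub hWA
  have hI0 : Integrable (fun y => γ * (W y * fN y)) μ := hWN.const_mul γ
  rw [hexp, integral_add hI1 hI0, integral_sub hI2 hWA,
    integral_sub hZA (hZN.const_mul γ), integral_const_mul, integral_const_mul,
    hα] at hint
  have hfinal : ∫ y, Z y * fN y ∂μ ≤ ∫ y, W y * fN y ∂μ := by nlinarith
  rw [← hZeqN]
  exact hfinal
end

section
/- Suppose a linear t-error-correcting code under hard-decision decoding satisfies P_{D|X}(i|c_i) = P_A for all valid messages i, and the conditional success probability depends on (y_p, c_i) only through the error pattern e = Q(y_p) ⊕ c_i^p via P_{A|E=e} = Σ_{u=0}^{t−d_H(e,0)} C(n−p,u) v^u (1−v)^{n−p−u}. Then the Neyman–Pearson quotient T_NP(y_p) = dP_{Y^p|A}/dP_{Y^p}(y_p) equals (1/P_A) Σ_{e ∈ C(s)} P_{E|Y}(e|y_p) · P_{A|E=e}, where s = H_p Q(y_p) and C(s) is the coset of syndrome s. -/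
open Finset
open scoped Classical

/-- Theorem 4: for a linear `t`-error-correcting code (codebook = kernel of the parity-check
matrix `H`) under hard-decision decoding, with per-bit channel likelihoods `w`, hard-decision
quantizer `Q(y_k)`, equal per-codeword success probabilities `P_A`, and conditional success
probability `PAE e` depending only on the error pattern `e` through its Hamming weight via
the binomial tail, the Neyman–Pearson quotient `T_NP(y_p) = dP_{Y^p|A}/dP_{Y^p}(y_p)` equals
`(1/P_A) Σ_{e ∈ C(s)} P_{E|Y}(e|y_p) · P_{A|E=e}`, where `s = H·Q(y_p)` and `C(s)` is the
coset of syndrome `s`. -/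
theorem stmt10 (p m n t : ℕ) (H : Matrix (Fin m) (Fin p) (ZMod 2))
    (v : ℝ) (w : ℝ → ZMod 2 → ℝ) (hw : ∀ r x, 0 < w r x)
    (Q : ℝ → ZMod 2) (P_A : ℝ) (hPA : 0 < P_A)
    (PAE : (Fin p → ZMod 2) → ℝ)
    (hPAE : ∀ e, PAE e =
      if hammingDist e (0 : Fin p → ZMod 2) ≤ t then
        ∑ u ∈ Finset.range (t - hammingDist e (0 : Fin p → ZMod 2) + 1),
          ((n - p).choose u : ℝ) * v ^ u * (1 - v) ^ (n - p - u)
      else 0)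
    (y : Fin p → ℝ)
    (code coset : Finset (Fin p → ZMod 2))
    (hcode : code = Finset.univ.filter (fun x => H.mulVec x = 0))
    (hcoset : coset = Finset.univ.filter (fun e => H.mulVec e = H.mulVec (fun k => Q (y k))))
    (lik : (Fin p → ZMod 2) → ℝ) (hlik : ∀ x, lik x = ∏ k, w (y k) (x k))
    (post : (Fin p → ZMod 2) → ℝ)
    (hpost : ∀ e, post e =
      lik (fun k => Q (y k) + e k) / ∑ e' ∈ coset, lik (fun k => Q (y k) + e' k))
    (fA fY : ℝ)
    (hfA : fA = (∑ x ∈ code, lik x * PAE (fun k => Q (y k) + x k)) / ((code.card : ℝ) * P_A))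
    (hfY : fY = (∑ x ∈ code, lik x) / (code.card : ℝ)) :
    fA / fY = (1 / P_A) * ∑ e ∈ coset, post e * PAE e := by
  subst hcode hcoset
  have hadd : ∀ a b : ZMod 2, a + (a + b) = b := by decide
  have hlikpos : ∀ x, 0 < lik x := by
    intro x; rw [hlik]; exact Finset.prod_pos fun k _ => hw _ _
  -- bijection between code and coset
  have hbij : ∀ F : (Fin p → ZMod 2) → ℝ,
      ∑ x ∈ Finset.univ.filter (fun x => H.mulVec x = 0), F (fun k => Q (y k) + x k)
        = ∑ e ∈ Finset.univ.filter (fun e => H.mulVec e = H.mulVec (fun k => Q (y k))), F e := by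
    intro F
    refine Finset.sum_nbij' (fun x => fun k => Q (y k) + x k)
      (fun e => fun k => Q (y k) + e k) ?_ ?_ ?_ ?_ ?_
    · intro a ha
      simp only [Finset.mem_filter, Finset.mem_univ, true_and] at ha ⊢
      have : (fun k => Q (y k) + a k) = (fun k => Q (y k)) + a := rfl
      rw [this, Matrix.mulVec_add, ha, add_zero]
    · intro e he
      simp only [Finset.mem_filter, Finset.mem_univ, true_and] at he ⊢
      have : (fun k => Q (y k) + e k) = (fun k => Q (y k)) + e := rfl
      rw [this, Matrix.mulVec_add, he]
      have h2 : H.mulVec (fun k => Q (y k)) + H.mulVec (fun k => Q (y k)) = 0 := by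
        funext i; exact CharTwo.add_self_eq_zero _
      rw [h2]
    · intro a _; funext k; exact hadd _ _
    · intro e _; funext k; exact hadd _ _
    · intro a _; rfl
  set S := ∑ e' ∈ Finset.univ.filter (fun e => H.mulVec e = H.mulVec (fun k => Q (y k))),
      lik (fun k => Q (y k) + e' k) with hS
  have hSpos : 0 < S := by
    refine Finset.sum_pos (fun e _ => hlikpos _) ⟨fun k => Q (y k), ?_⟩
    simp
  have hcard : (0 : ℝ) < ((Finset.univ.filter (fun x => H.mulVec x = 0)).card : ℝ) := by
    have : (0 : Fin p → ZMod 2) ∈ Finset.univ.filter (fun x => H.mulVec x = 0) := by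
      simp [Matrix.mulVec_zero]
    exact_mod_cast Finset.card_pos.mpr ⟨_, this⟩
  -- rewrite sums
  have h1 : ∑ x ∈ Finset.univ.filter (fun x => H.mulVec x = 0),
      lik x * PAE (fun k => Q (y k) + x k)
      = ∑ e ∈ Finset.univ.filter (fun e => H.mulVec e = H.mulVec (fun k => Q (y k))),
          lik (fun k => Q (y k) + e k) * PAE e := by
    have := hbij (fun e => lik (fun k => Q (y k) + e k) * PAE e)
    simp only at this
    rw [← this]
    refine Finset.sum_congr rfl fun x hx => ?_
    congr 1
    · congr 1; funext k; exact (hadd _ _).symm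
  have h2 : ∑ x ∈ Finset.univ.filter (fun x => H.mulVec x = 0), lik x = S := by
    rw [hS, ← hbij (fun e => lik fun k => Q (y k) + e k)]
    refine Finset.sum_congr rfl fun x hx => ?_
    congr 1; funext k; exact (hadd _ _).symm
  have h3 : ∑ e ∈ Finset.univ.filter (fun e => H.mulVec e = H.mulVec (fun k => Q (y k))),
      post e * PAE e
      = (∑ e ∈ Finset.univ.filter (fun e => H.mulVec e = H.mulVec (fun k => Q (y k))),
          lik (fun k => Q (y k) + e k) * PAE e) / S := by
    rw [Finset.sum_div]
    refine Finset.sum_congr rfl fun e _ => ?_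
    rw [hpost e, div_mul_eq_mul_div]
  rw [hfA, hfY, h1, h2, h3]
  field_simp
end

section
/- For x_1, …, x_p ∈ (0,1) all equal to a common value x, the p-th root of ∏_{i=1}^p (1 − x_i) equals 1 − (1/p)Σ_{i=1}^p x_i; consequently, if the per-bit error estimates P_{E_i} = 1/(1+exp|Λ_i|) are all equal, the threshold test on the p-th root of T_NP(y_p) = (δ/P_A)∏_i(1 − P_{E_i}) induces exactly the same decision regions as the test that accepts when the reciprocal of the average bit error estimate (1/p Σ_i P_{E_i})^{−1} exceeds a corresponding threshold. -/
open Finset Real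

lemma root_pow_aux (p : ℕ) (hp : 0 < p) (b : ℝ) (hb : 0 ≤ b) :
    ((b ^ p : ℝ)) ^ ((p : ℝ)⁻¹) = b := by
  rw [← Real.rpow_natCast b p, ← Real.rpow_mul hb,
    mul_inv_cancel₀ (by exact_mod_cast hp.ne'), Real.rpow_one]

/-- Proposition 3 / equation (26): if all per-bit error estimates `x i` equal a common value
`a ∈ (0,1)`, the `p`-th root of `∏ (1 - x i)` equals `1 - (1/p) Σ x i`; consequently the
threshold test on the `p`-th root of `T_NP = K ∏ (1 - x i)` induces exactly the same
decision regions as thresholding the reciprocal of the average bit error estimate. -/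
theorem stmt12 (p : ℕ) (hp : 0 < p) :
    (∀ (x : Fin p → ℝ) (a : ℝ), 0 < a → a < 1 → (∀ i, x i = a) →
      (∏ i, (1 - x i)) ^ ((p : ℝ)⁻¹) = 1 - (∑ i, x i) / p) ∧
    ∀ K c : ℝ, 0 < K → 0 < c → c ^ ((p : ℝ)⁻¹) < K ^ ((p : ℝ)⁻¹) → ∃ c' : ℝ, 0 < c' ∧
      ∀ (x : Fin p → ℝ) (a : ℝ), 0 < a → a < 1 → (∀ i, x i = a) →
        (c ^ ((p : ℝ)⁻¹) ≤ (K * ∏ i, (1 - x i)) ^ ((p : ℝ)⁻¹) ↔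
          c' ≤ ((∑ i, x i) / p)⁻¹) := by
  have hp0 : (p : ℝ) ≠ 0 := by exact_mod_cast hp.ne'
  have hprod : ∀ (x : Fin p → ℝ) (a : ℝ), (∀ i, x i = a) →
      (∏ i, (1 - x i)) = (1 - a) ^ p := by
    intro x a hx
    simp [hx, Finset.prod_const]
  have hsum : ∀ (x : Fin p → ℝ) (a : ℝ), (∀ i, x i = a) →
      (∑ i, x i) / p = a := by
    intro x a hx
    simp [hx, Finset.sum_const]
    field_simp
  constructor
  · intro x a ha0 ha1 hx
    rw [hprod x a hx, hsum x a hx, root_pow_aux p hp _ (by linarith)]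
  · intro K c hK hc hlt
    set t : ℝ := 1 - (c / K) ^ ((p : ℝ)⁻¹) with ht
    have hcK : (c / K) ^ ((p : ℝ)⁻¹) = c ^ ((p : ℝ)⁻¹) / K ^ ((p : ℝ)⁻¹) :=
      Real.div_rpow hc.le hK.le _
    have hKpos : 0 < K ^ ((p : ℝ)⁻¹) := Real.rpow_pos_of_pos hK _
    have ht0 : 0 < t := by
      rw [ht, hcK]
      have : c ^ ((p : ℝ)⁻¹) / K ^ ((p : ℝ)⁻¹) < 1 := (div_lt_one hKpos).mpr hlt
      linarith
    refine ⟨t⁻¹, inv_pos.mpr ht0, ?_⟩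
    intro x a ha0 ha1 hx
    rw [hprod x a hx, hsum x a hx,
      Real.mul_rpow hK.le (pow_nonneg (by linarith) p), root_pow_aux p hp _ (by linarith)]
    rw [inv_le_inv₀ ht0 ha0]
    constructor
    · intro h
      have h2 : c ^ ((p : ℝ)⁻¹) / K ^ ((p : ℝ)⁻¹) ≤ 1 - a :=
        (div_le_iff₀ hKpos).mpr (by linarith [mul_comm (K ^ ((p : ℝ)⁻¹)) (1 - a)])
      rw [ht, hcK]; linarith
    · intro h
      rw [ht, hcK] at h
      have h2 : c ^ ((p : ℝ)⁻¹) / K ^ ((p : ℝ)⁻¹) ≤ 1 - a := by linarith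
      have := (div_le_iff₀ hKpos).mp h2
      linarith [mul_comm (1 - a) (K ^ ((p : ℝ)⁻¹))]
end
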